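/- arXiv:1801.04995 — 3 statements merged into one kernel-verified Lean document; each statement's English description precedes it below -/
import Mathlib

section
/- Rolle's theorem for μ-differentiable functions: let 0 < a < b, g : [a,b] → ℝ continuous on [a,b], μ-differentiable on (a,b) for some μ ∈ (0,1), with g(a) = g(b). Then there exists ξ ∈ (a,b) with V^μ g(ξ) = 0. -/
open Real MeasureTheory Filter intervalIntegral

/-- Extended beta function `B_p(x,y)`. -/
noncomputable def extBeta (p x y : ℝ) : ℝ :=
  ∫ u in Set.Ioo (0:ℝ) 1, u ^ (x - 1) * (1 - u) ^ (y - 1) * Real.exp (-p / (u * (1 - u)))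

/-- Pochhammer symbol `(c)_n = Γ(c+n)/Γ(c)`. -/
noncomputable def poch (c : ℝ) (n : ℕ) : ℝ := Real.Gamma (c + n) / Real.Gamma c

/-- Truncated extended Mittag-Leffler partial sum. -/
noncomputable def truncML (i : ℕ) (p γ c α β z : ℝ) : ℝ :=
  ∑ n ∈ Finset.range (i + 1),
    extBeta p (γ + n) (c - γ) * poch c n * z ^ n /
      (extBeta 0 γ (c - γ) * Real.Gamma (α * n + β) * n.factorial)

/-- The `Γ(β)`-scaled truncated extended Mittag-Leffler function `S`. -/
noncomputable def truncS (i : ℕ) (p γ c α β z : ℝ) : ℝ :=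
  Real.Gamma β * truncML i p γ c α β z

/-- The constant `K = Γ(β) B_p(γ+1,c−γ) Γ(c+1) / (Γ(γ) Γ(c−γ) Γ(α+β))`. -/
noncomputable def Kconst (p γ c α β : ℝ) : ℝ :=
  Real.Gamma β * extBeta p (γ + 1) (c - γ) * Real.Gamma (c + 1) /
    (Real.Gamma γ * Real.Gamma (c - γ) * Real.Gamma (α + β))

/-- `g` has truncated ν-fractional derivative `L` of order `μ` at `t`. -/
def HasVDerivAt (i : ℕ) (p γ c α β μ : ℝ) (g : ℝ → ℝ) (t L : ℝ) : Prop :=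
  Filter.Tendsto (fun ε : ℝ =>
      (g (t * truncS i p γ c α β (ε * t ^ (-μ))) - g t) / ε)
    (nhdsWithin 0 {(0:ℝ)}ᶜ) (nhds L)

/-- The truncated ν-fractional derivative, for differentiable `f`:
`V^μ f (t) = K t^{1−μ} f'(t)`. -/
noncomputable def V (p γ c α β μ : ℝ) (f : ℝ → ℝ) (t : ℝ) : ℝ :=
  Kconst p γ c α β * t ^ (1 - μ) * deriv f t

/-- The ν-fractional integral `I^μ_a g (t) = K⁻¹ ∫_a^t g(x) x^{μ−1} dx`. -/
noncomputable def Iv (p γ c α β μ a : ℝ) (g : ℝ → ℝ) (t : ℝ) : ℝ :=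
  (Kconst p γ c α β)⁻¹ * ∫ x in a..t, g x * x ^ (μ - 1)

/-! For `i ≥ 1` the curve `ε ↦ t * S (ε * t ^ (-μ))` passes through `s₀ * t`, `s₀ = S 0`, with
nonzero speed `κ t`, so by the inverse function theorem the ν-difference quotient of `g` at `t`
becomes an ordinary difference quotient at `s₀ * t`. Here `s₀ = B_p(γ, c - γ) / B(γ, c - γ)` is
not `1` when `p > 0`: the quotient compares `g` near `s₀ * t` with `g t`. Its convergence at all `t`
near `ξ` makes `g (y / s₀)` the punctured limit of `g` at each `y` near `s₀ * ξ`, and then its limit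
`L` at `ξ` is `κ ξ` times the ordinary derivative of `y ↦ g (y / s₀)` at `s₀ * ξ`. Taking for `ξ`
an interior extremum of `g` on `[a, b]`, Fermat's theorem gives `L = 0`. For `i = 0` the curve is
constant, and the quotient `d / ε` converges only if `d = 0`. -/

open Set Topology

theorem HasStrictDerivAt.nhdsNE_le_map_nhdsNE {f : ℝ → ℝ} {f' a : ℝ}
    (hf : HasStrictDerivAt f f' a) (hf' : f' ≠ 0) : 𝓝[≠] (f a) ≤ map f (𝓝[≠] a) := by
  set ψ := hf.localInverse f f' a hf'
  have hψa : ψ (f a) = a := (hf.eventually_left_inverse hf').self_of_nhds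
  have hψ : Tendsto ψ (𝓝[≠] (f a)) (𝓝[≠] a) := by
    simpa [hψa] using (hf.to_localInverse hf').hasDerivAt.tendsto_nhdsNE (inv_ne_zero hf')
  calc 𝓝[≠] (f a) = map (f ∘ ψ) (𝓝[≠] (f a)) :=
        (map_congr (nhdsWithin_le_nhds (hf.eventually_right_inverse hf'))).trans
          map_id |>.symm
    _ = map f (map ψ (𝓝[≠] (f a))) := (map_map).symm
    _ ≤ map f (𝓝[≠] a) := map_mono hψ

theorem tendsto_nhdsNE_of_forall_tendsto_nhdsNE {X Y : Type*} [TopologicalSpace X] [T1Space X]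
    [∀ x : X, (𝓝[≠] x).NeBot] [TopologicalSpace Y] [RegularSpace Y] {q Q : X → Y} {x₀ : X} {ℓ : Y}
    (hq : Tendsto q (𝓝[≠] x₀) (𝓝 ℓ)) (hQ : ∀ᶠ y in 𝓝[≠] x₀, Tendsto q (𝓝[≠] y) (𝓝 (Q y))) :
    Tendsto Q (𝓝[≠] x₀) (𝓝 ℓ) := by
  refine (closed_nhds_basis ℓ).tendsto_right_iff.2 fun C ⟨hCℓ, hC⟩ => ?_
  filter_upwards [eventually_eventually_nhdsWithin.2 (hq hCℓ), hQ, self_mem_nhdsWithin]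
    with y hy hQy hyx
  have : 𝓝[≠] y ≤ 𝓝[{x₀}ᶜ] y := nhdsWithin_le_nhds.trans
    (nhdsWithin_eq_nhds.2 (isOpen_compl_singleton.mem_nhds hyx)).ge
  exact hC.mem_of_tendsto hQy (this hy)

theorem tendsto_nhds_of_tendsto_sub_div_self {f : ℝ → ℝ} {v L : ℝ}
    (h : Tendsto (fun ε => (f ε - v) / ε) (𝓝[≠] 0) (𝓝 L)) : Tendsto f (𝓝[≠] 0) (𝓝 v) := by
  have h' := (h.mul (tendsto_id.mono_left nhdsWithin_le_nhds)).add_const v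
  rw [mul_zero, zero_add] at h'
  refine h'.congr' ?_
  filter_upwards [self_mem_nhdsWithin] with ε hε
  simp [div_mul_cancel₀ _ (show ε ≠ 0 from hε)]

theorem hasDerivAt_of_tendsto_nhdsNE {g G : ℝ → ℝ} {y₀ D : ℝ}
    (hG : ∀ᶠ y in 𝓝[≠] y₀, Tendsto g (𝓝[≠] y) (𝓝 (G y)))
    (hD : Tendsto (fun y => (g y - G y₀) / (y - y₀)) (𝓝[≠] y₀) (𝓝 D)) :
    HasDerivAt G D y₀ := by
  rw [hasDerivAt_iff_tendsto_slope]
  refine tendsto_nhdsNE_of_forall_tendsto_nhdsNE hD ?_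
  filter_upwards [hG, self_mem_nhdsWithin] with y hy hyy₀
  rw [slope_def_field]
  exact (hy.sub_const _).div (tendsto_id.mono_left nhdsWithin_le_nhds |>.sub_const y₀)
    (sub_ne_zero.2 hyy₀)

section

variable {φ g : ℝ → ℝ} {κ v L : ℝ}

theorem tendsto_nhdsNE_of_tendsto_comp_sub_div (hφ : HasStrictDerivAt φ κ 0) (hκ : κ ≠ 0)
    (h : Tendsto (fun ε => (g (φ ε) - v) / ε) (𝓝[≠] 0) (𝓝 L)) :
    Tendsto g (𝓝[≠] (φ 0)) (𝓝 v) :=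
  (tendsto_map'_iff.2 (tendsto_nhds_of_tendsto_sub_div_self h)).mono_left
    (hφ.nhdsNE_le_map_nhdsNE hκ)

theorem tendsto_sub_div_sub_of_tendsto_comp_sub_div (hφ : HasStrictDerivAt φ κ 0) (hκ : κ ≠ 0)
    (h : Tendsto (fun ε => (g (φ ε) - v) / ε) (𝓝[≠] 0) (𝓝 L)) :
    Tendsto (fun y => (g y - v) / (y - φ 0)) (𝓝[≠] (φ 0)) (𝓝 (L / κ)) := by
  have hslope : Tendsto (fun ε => (φ ε - φ 0) / ε) (𝓝[≠] 0) (𝓝 κ) := by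
    refine (hasDerivAt_iff_tendsto_slope.1 hφ.hasDerivAt).congr fun ε => ?_
    rw [slope_def_field, sub_zero]
  refine (tendsto_map'_iff.2 ?_).mono_left (hφ.nhdsNE_le_map_nhdsNE hκ)
  refine (h.div hslope hκ).congr' ?_
  filter_upwards [self_mem_nhdsWithin] with ε hε
  simp only [Function.comp_apply, Pi.div_apply]
  rw [div_div_div_cancel_right₀ (show ε ≠ 0 from hε)]

end

theorem eq_zero_of_isLocalExtr_of_tendsto_sub_div {g : ℝ → ℝ} {φ : ℝ → ℝ → ℝ} {κ : ℝ → ℝ}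
    {s₀ ξ L : ℝ} (hs₀ : s₀ ≠ 0) (hξ : IsLocalExtr g ξ) (hφ₀ : ∀ t, φ t 0 = t * s₀)
    (hφ : ∀ᶠ t in 𝓝 ξ, HasStrictDerivAt (φ t) (κ t) 0 ∧ κ t ≠ 0 ∧
      ∃ L, Tendsto (fun ε => (g (φ t ε) - g t) / ε) (𝓝[≠] 0) (𝓝 L))
    (hL : Tendsto (fun ε => (g (φ ξ ε) - g ξ) / ε) (𝓝[≠] 0) (𝓝 L)) :
    L = 0 := by
  set G : ℝ → ℝ := fun y => g (y / s₀)
  have hdiv : Tendsto (· / s₀) (𝓝 (ξ * s₀)) (𝓝 ξ) := by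
    simpa [hs₀] using (continuous_id.div_const s₀).tendsto (ξ * s₀)
  have hG : ∀ᶠ y in 𝓝[≠] (ξ * s₀), Tendsto g (𝓝[≠] y) (𝓝 (G y)) := by
    refine (hdiv.eventually hφ).filter_mono nhdsWithin_le_nhds |>.mono
      fun y ⟨hφy, hκy, L', hL'⟩ => ?_
    simpa [hφ₀, G, hs₀] using tendsto_nhdsNE_of_tendsto_comp_sub_div hφy hκy hL'
  obtain ⟨hφξ, hκξ, -⟩ := hφ.self_of_nhds
  have hD := tendsto_sub_div_sub_of_tendsto_comp_sub_div hφξ hκξ hL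
  rw [hφ₀] at hD
  have hGD : HasDerivAt G (L / κ ξ) (ξ * s₀) :=
    hasDerivAt_of_tendsto_nhdsNE hG (by simpa [G, hs₀] using hD)
  have hGξ : IsLocalExtr G (ξ * s₀) :=
    IsLocalExtr.comp_continuous (g := (· / s₀)) (by simpa [hs₀] using hξ)
      (continuous_id.div_const s₀).continuousAt
  simpa [hκξ] using hGξ.hasDerivAt_eq_zero hGD

theorem integrableOn_rpow_mul_one_sub_rpow {x y : ℝ} (hx : 0 < x) (hy : 0 < y) :
    IntegrableOn (fun u : ℝ => u ^ (x - 1) * (1 - u) ^ (y - 1)) (Ioo 0 1) := by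
  have h := (Complex.betaIntegral_convergent (u := x) (v := y) (by simpa) (by simpa)).norm
  rw [intervalIntegrable_iff_integrableOn_Ioo_of_le zero_le_one] at h
  refine h.congr_fun (fun u ⟨hu₀, hu₁⟩ => ?_) measurableSet_Ioo
  have hu₁' : (0 : ℝ) < 1 - u := sub_pos.2 hu₁
  have h1u : (1 : ℂ) - u = ((1 - u : ℝ) : ℂ) := by push_cast; ring
  dsimp only
  rw [norm_mul, h1u, Complex.norm_cpow_eq_rpow_re_of_pos hu₀,
    Complex.norm_cpow_eq_rpow_re_of_pos hu₁']
  simp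

theorem extBeta_integrand_pos (p x y : ℝ) {u : ℝ} (hu : u ∈ Ioo (0 : ℝ) 1) :
    0 < u ^ (x - 1) * (1 - u) ^ (y - 1) * exp (-p / (u * (1 - u))) := by
  have hu₁ : 0 < 1 - u := sub_pos.2 hu.2
  exact mul_pos (mul_pos (rpow_pos_of_pos hu.1 _) (rpow_pos_of_pos hu₁ _)) (exp_pos _)

theorem integrableOn_extBeta_integrand {p x y : ℝ} (hp : 0 ≤ p) (hx : 0 < x) (hy : 0 < y) :
    IntegrableOn (fun u : ℝ => u ^ (x - 1) * (1 - u) ^ (y - 1) * exp (-p / (u * (1 - u))))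
      (Ioo 0 1) := by
  refine (integrableOn_rpow_mul_one_sub_rpow hx hy).mono' ?_ ?_
  · refine ContinuousOn.aestronglyMeasurable (fun u ⟨hu₀, hu₁⟩ => ?_) measurableSet_Ioo
    have hu₁' : 1 - u ≠ 0 := (sub_pos.2 hu₁).ne'
    have : u * (1 - u) ≠ 0 := mul_ne_zero hu₀.ne' hu₁'
    refine ContinuousAt.continuousWithinAt (ContinuousAt.mul ?_ (by fun_prop (disch := assumption)))
    exact (continuousAt_id.rpow_const (.inl hu₀.ne')).mul
      ((continuousAt_const.sub continuousAt_id).rpow_const (.inl hu₁'))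
  · refine (ae_restrict_iff' measurableSet_Ioo).2 (ae_of_all _ fun u hu => ?_)
    have hu₁ : 0 < 1 - u := sub_pos.2 hu.2
    rw [norm_of_nonneg (extBeta_integrand_pos p x y hu).le]
    refine mul_le_of_le_one_right
      (mul_pos (rpow_pos_of_pos hu.1 _) (rpow_pos_of_pos hu₁ _)).le (exp_le_one_iff.2 ?_)
    exact div_nonpos_of_nonpos_of_nonneg (neg_nonpos.2 hp) (mul_pos hu.1 hu₁).le

theorem extBeta_pos {p x y : ℝ} (hp : 0 ≤ p) (hx : 0 < x) (hy : 0 < y) : 0 < extBeta p x y := by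
  rw [extBeta, setIntegral_pos_iff_support_of_nonneg_ae
    (ae_restrict_of_forall_mem measurableSet_Ioo fun u hu => (extBeta_integrand_pos p x y hu).le)
    (integrableOn_extBeta_integrand hp hx hy),
    inter_eq_right.2 fun u hu => Function.mem_support.2 (extBeta_integrand_pos p x y hu).ne']
  simp

theorem poch_pos {c : ℝ} (hc : 0 < c) (n : ℕ) : 0 < poch c n :=
  div_pos (Gamma_pos_of_pos (by positivity)) (Gamma_pos_of_pos hc)

theorem truncS_apply_zero_pos (i : ℕ) {p γ c α β : ℝ} (hp : 0 ≤ p) (hγ : 0 < γ) (hγc : γ < c)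
    (hβ : 0 < β) : 0 < truncS i p γ c α β 0 := by
  rw [truncS, truncML, Finset.sum_eq_single_of_mem 0 (Finset.mem_range.2 i.succ_pos)
    fun n _ hn => by simp [zero_pow hn]]
  have := Gamma_pos_of_pos hβ
  have := poch_pos (hγ.trans hγc) 0
  have := extBeta_pos hp hγ (sub_pos.2 hγc)
  have := extBeta_pos le_rfl hγ (sub_pos.2 hγc)
  simp only [CharP.cast_eq_zero, add_zero, pow_zero, mul_one, mul_zero, zero_add,
    Nat.factorial_zero, Nat.cast_one]
  positivity

theorem truncS_zero_eq_apply_zero (p γ c α β z : ℝ) :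
    truncS 0 p γ c α β z = truncS 0 p γ c α β 0 := by
  simp [truncS, truncML]

theorem hasStrictDerivAt_truncS {i : ℕ} (hi : 1 ≤ i) (p γ c α β : ℝ) :
    HasStrictDerivAt (truncS i p γ c α β)
      (Gamma β * (extBeta p (γ + 1) (c - γ) * poch c 1 /
        (extBeta 0 γ (c - γ) * Gamma (α + β)))) 0 := by
  have h := (HasStrictDerivAt.sum fun n (_ : n ∈ Finset.range (i + 1)) =>
    ((hasStrictDerivAt_pow n (0 : ℝ)).const_mul (extBeta p (γ + n) (c - γ) * poch c n)).div_const
      (extBeta 0 γ (c - γ) * Gamma (α * n + β) * n.factorial)).const_mul (Gamma β)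
  refine (h.congr_deriv ?_).congr_of_eventuallyEq
    (.of_forall fun z => by simp [truncS, truncML, Finset.sum_apply])
  rw [Finset.sum_eq_single_of_mem 1 (Finset.mem_range.2 (by omega)) fun n _ hn => ?_]
  · simp
  · rcases n with _ | _ | n <;> simp_all

theorem HasVDerivAt.zero_of_truncation_zero {p γ c α β μ t L : ℝ} {g : ℝ → ℝ}
    (h : HasVDerivAt 0 p γ c α β μ g t L) : HasVDerivAt 0 p γ c α β μ g t 0 := by
  unfold HasVDerivAt at h ⊢
  simp_rw [truncS_zero_eq_apply_zero _ _ _ _ _ (_ * _)] at h ⊢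
  have hg : g (t * truncS 0 p γ c α β 0) = g t :=
    tendsto_const_nhds_iff.1 (tendsto_nhds_of_tendsto_sub_div_self h)
  simp [hg]

theorem HasVDerivAt.eq_zero_of_isLocalExtr {i : ℕ} {p γ c α β μ ξ L : ℝ} {g : ℝ → ℝ}
    (hi : 1 ≤ i) (hp : 0 ≤ p) (hγ : 0 < γ) (hγc : γ < c) (hα : 0 < α) (hβ : 0 < β)
    (hξ₀ : 0 < ξ) (hξ : IsLocalExtr g ξ)
    (hdiff : ∀ᶠ t in 𝓝 ξ, ∃ L, HasVDerivAt i p γ c α β μ g t L)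
    (hL : HasVDerivAt i p γ c α β μ g ξ L) : L = 0 := by
  obtain ⟨S', hS'pos, hS'⟩ : ∃ S' > 0, HasStrictDerivAt (truncS i p γ c α β) S' 0 := by
    refine ⟨_, ?_, hasStrictDerivAt_truncS hi p γ c α β⟩
    have := Gamma_pos_of_pos hβ
    have := Gamma_pos_of_pos (add_pos hα hβ)
    have := poch_pos (hγ.trans hγc) 1
    have := extBeta_pos hp (by linarith : 0 < γ + 1) (sub_pos.2 hγc)
    have := extBeta_pos le_rfl hγ (sub_pos.2 hγc)
    positivity
  have hcurve (t : ℝ) : HasStrictDerivAt (fun ε => t * truncS i p γ c α β (ε * t ^ (-μ)))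
      (t * (S' * t ^ (-μ))) 0 := by
    have hS : HasStrictDerivAt (truncS i p γ c α β) S' (0 * t ^ (-μ)) := by simpa using hS'
    simpa using (hS.comp (h := fun ε => ε * t ^ (-μ)) 0
      ((hasStrictDerivAt_id 0).mul_const _)).const_mul t
  refine eq_zero_of_isLocalExtr_of_tendsto_sub_div
    (φ := fun t ε => t * truncS i p γ c α β (ε * t ^ (-μ))) (κ := fun t => t * (S' * t ^ (-μ)))
    (truncS_apply_zero_pos i (α := α) hp hγ hγc hβ).ne' hξ (fun t => by simp) ?_ hL
  filter_upwards [lt_mem_nhds hξ₀, hdiff] with t ht ht'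
  exact ⟨hcurve t, by have := rpow_pos_of_pos ht (-μ); positivity, ht'⟩

theorem stmt11_general (p γ c α β μ a b : ℝ) (i : ℕ) (g : ℝ → ℝ)
    (hp : 0 ≤ p) (hγ : 0 < γ) (hγc : γ < c) (hα : 0 < α) (hβ : 0 < β)
    (ha : 0 < a) (hab : a < b)
    (hcont : ContinuousOn g (Set.Icc a b))
    (hdiff : ∀ t ∈ Set.Ioo a b, ∃ L, HasVDerivAt i p γ c α β μ g t L)
    (heq : g a = g b) :
    ∃ ξ ∈ Set.Ioo a b, HasVDerivAt i p γ c α β μ g ξ 0 := by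
  obtain ⟨ξ, hξ, hext⟩ := exists_Ioo_extr_on_Icc hab hcont heq
  obtain ⟨L, hL⟩ := hdiff ξ hξ
  refine ⟨ξ, hξ, ?_⟩
  rcases Nat.eq_zero_or_pos i with rfl | hi
  · exact hL.zero_of_truncation_zero
  · have hL₀ : L = 0 := hL.eq_zero_of_isLocalExtr hi hp hγ hγc hα hβ (ha.trans hξ.1)
      (hext.isLocalExtr (Icc_mem_nhds hξ.1 hξ.2))
      (eventually_of_mem (Ioo_mem_nhds hξ.1 hξ.2) hdiff)
    rwa [hL₀] at hL

theorem stmt11 (p γ c α β μ a b : ℝ) (i : ℕ) (g : ℝ → ℝ)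
    (hp : 0 ≤ p) (hγ : 0 < γ) (hγc : γ < c) (hα : 0 < α) (hβ : 0 < β)
    (ha : 0 < a) (hab : a < b) (hμ : 0 < μ) (hμ1 : μ < 1)
    (hcont : ContinuousOn g (Set.Icc a b))
    (hdiff : ∀ t ∈ Set.Ioo a b, ∃ L, HasVDerivAt i p γ c α β μ g t L)
    (heq : g a = g b) :
    ∃ ξ ∈ Set.Ioo a b, HasVDerivAt i p γ c α β μ g ξ 0 :=
  stmt11_general p γ c α β μ a b i g hp hγ hγc hα hβ ha hab hcont hdiff heq
end

section
/- Mean value theorem for μ-differentiable functions: let 0 < a < b, g : [a,b] → ℝ continuous on [a,b] and differentiable on (a,b), μ ∈ (0,1). Then there exists ξ ∈ (a,b) such that V^μ g(ξ) = K · (g(b) − g(a)) / (b^μ/μ − a^μ/μ), where K = Γ(β)B_p(γ+1,c−γ)Γ(c+1)/(Γ(γ)Γ(c−γ)Γ(α+β)). -/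
open Real MeasureTheory Filter intervalIntegral

/-! Cauchy's mean value theorem for `g` against `x ↦ x ^ μ / μ`, whose derivative `x ^ (μ - 1)`
cancels the weight `t ^ (1 - μ)` in `V^μ`. -/

theorem rpow_div_self_lt_rpow_div_self {a b μ : ℝ} (ha : 0 < a) (hab : a < b) (hμ : μ ≠ 0) :
    a ^ μ / μ < b ^ μ / μ := by
  rcases hμ.lt_or_gt with hneg | hpos
  · exact div_lt_div_of_neg_of_lt hneg (Real.rpow_lt_rpow_of_neg ha hab hneg)
  · exact div_lt_div_of_pos_right (Real.rpow_lt_rpow ha.le hab hpos) hpos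

theorem hasDerivAt_rpow_div_self {μ x : ℝ} (hμ : μ ≠ 0) (hx : x ≠ 0) :
    HasDerivAt (fun t : ℝ => t ^ μ / μ) (x ^ (μ - 1)) x := by
  simpa only [mul_div_cancel_left₀ _ hμ] using
    (Real.hasDerivAt_rpow_const (p := μ) (Or.inl hx)).div_const μ

theorem exists_rpow_mul_deriv_eq_div_sub {a b μ : ℝ} {g : ℝ → ℝ} (ha : 0 < a) (hab : a < b)
    (hμ : μ ≠ 0) (hcont : ContinuousOn g (Set.Icc a b))
    (hdiff : DifferentiableOn ℝ g (Set.Ioo a b)) :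
    ∃ ξ ∈ Set.Ioo a b, ξ ^ (1 - μ) * deriv g ξ = (g b - g a) / (b ^ μ / μ - a ^ μ / μ) := by
  have hpow_cont : ContinuousOn (fun t : ℝ => t ^ μ / μ) (Set.Icc a b) :=
    (continuousOn_id.rpow_const fun x hx => Or.inl (ha.trans_le hx.1).ne').div_const μ
  obtain ⟨ξ, hξ, hcauchy⟩ := exists_ratio_hasDerivAt_eq_ratio_slope (fun t : ℝ => t ^ μ / μ)
    (fun t => t ^ (μ - 1)) hab hpow_cont
    (fun x hx => hasDerivAt_rpow_div_self hμ (ha.trans hx.1).ne') g (deriv g) hcont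
    (fun x hx => (hdiff.differentiableAt (isOpen_Ioo.mem_nhds hx)).hasDerivAt)
  refine ⟨ξ, hξ, ?_⟩
  have hden : b ^ μ / μ - a ^ μ / μ ≠ 0 :=
    (sub_pos.2 (rpow_div_self_lt_rpow_div_self ha hab hμ)).ne'
  have hweight : ξ ^ (1 - μ) * ξ ^ (μ - 1) = 1 := by
    rw [← Real.rpow_add (ha.trans hξ.1)]
    norm_num
  rw [eq_div_iff hden]
  linear_combination (g b - g a) * hweight - ξ ^ (1 - μ) * hcauchy

theorem stmt12_general (p γ c α β μ a b : ℝ) (g : ℝ → ℝ)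
    (ha : 0 < a) (hab : a < b) (hμ : 0 < μ)
    (hcont : ContinuousOn g (Set.Icc a b))
    (hdiff : DifferentiableOn ℝ g (Set.Ioo a b)) :
    ∃ ξ ∈ Set.Ioo a b, V p γ c α β μ g ξ =
      Kconst p γ c α β * (g b - g a) / (b ^ μ / μ - a ^ μ / μ) := by
  obtain ⟨ξ, hξ, hmvt⟩ := exists_rpow_mul_deriv_eq_div_sub ha hab hμ.ne' hcont hdiff
  exact ⟨ξ, hξ, by rw [V, mul_assoc, hmvt, mul_div_assoc]⟩

theorem stmt12 (p γ c α β μ a b : ℝ) (g : ℝ → ℝ)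
    (hp : 0 ≤ p) (hγ : 0 < γ) (hγc : γ < c) (hα : 0 < α) (hβ : 0 < β)
    (ha : 0 < a) (hab : a < b) (hμ : 0 < μ) (hμ1 : μ < 1)
    (hcont : ContinuousOn g (Set.Icc a b))
    (hdiff : DifferentiableOn ℝ g (Set.Ioo a b)) :
    ∃ ξ ∈ Set.Ioo a b, V p γ c α β μ g ξ =
      Kconst p γ c α β * (g b - g a) / (b ^ μ / μ - a ^ μ / μ) :=
  stmt12_general p γ c α β μ a b g ha hab hμ hcont hdiff
end

section
/- Non-semigroup property of the ν-fractional integral: for g continuous on [a,t], 0 < a ≤ t, and μ, η ∈ (0,1), I^μ_a(I^η_a g)(t) = K^{−1}[(t^μ/μ)·I^η_a g(t) − (1/μ)·I^{μ+η}_a g(t)]. -/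
open Real MeasureTheory Filter intervalIntegral

/-
Writing `F x = ∫_a^x g(y) y^{η-1} dy`, the left side is `K⁻² ∫_a^t F(x) x^{μ-1} dx`. Integrating
by parts against the antiderivative `x^μ / μ` of `x^{μ-1}`, and using `F a = 0`, gives
`(t^μ/μ) F(t) - (1/μ) ∫_a^t g(x) x^{μ+η-1} dx`, which is the right side.
-/

open Set

theorem continuousOn_rpow_const_Icc_of_pos {a : ℝ} (ha : 0 < a) (b r : ℝ) :
    ContinuousOn (fun x : ℝ => x ^ r) (Icc a b) :=
  (continuousOn_id' _).rpow_const fun _ hx => Or.inl (ha.trans_le hx.1).ne'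

theorem hasDerivAt_integral_of_continuousOn_Icc {h : ℝ → ℝ} {a b x : ℝ}
    (hh : ContinuousOn h (Icc a b)) (hx : x ∈ Ioo a b) :
    HasDerivAt (fun y => ∫ s in a..y, h s) (h x) x :=
  integral_hasDerivAt_right
    ((hh.mono (Icc_subset_Icc_right hx.2.le)).intervalIntegrable_of_Icc hx.1.le)
    ((hh.mono Ioo_subset_Icc_self).stronglyMeasurableAtFilter isOpen_Ioo x hx)
    (hh.continuousAt (Icc_mem_nhds hx.1 hx.2))

theorem integral_primitive_mul_deriv {h v v' : ℝ → ℝ} {a b : ℝ} (hab : a ≤ b)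
    (hh : ContinuousOn h (Icc a b)) (hv : ContinuousOn v (Icc a b))
    (hvv' : ∀ x ∈ Ioo a b, HasDerivAt v (v' x) x) (hv' : IntervalIntegrable v' volume a b) :
    ∫ x in a..b, (∫ y in a..x, h y) * v' x =
      v b * (∫ x in a..b, h x) - ∫ x in a..b, h x * v x := by
  have hIcc : uIcc a b = Icc a b := uIcc_of_le hab
  have hIoo : Ioo (min a b) (max a b) = Ioo a b := by rw [min_eq_left hab, max_eq_right hab]
  rw [integral_mul_deriv_eq_deriv_mul_of_hasDerivAt
      (continuousOn_primitive_interval (by rw [hIcc]; exact hh.integrableOn_Icc))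
      (hIcc ▸ hv)
      (hIoo ▸ fun x hx => hasDerivAt_integral_of_continuousOn_Icc hh hx) (hIoo ▸ hvv')
      (hh.intervalIntegrable_of_Icc hab) hv', integral_same]
  ring

theorem integral_primitive_mul_rpow {h : ℝ → ℝ} {a b μ : ℝ} (ha : 0 < a) (hab : a ≤ b)
    (hμ : μ ≠ 0) (hh : ContinuousOn h (Icc a b)) :
    ∫ x in a..b, (∫ y in a..x, h y) * x ^ (μ - 1) =
      b ^ μ / μ * (∫ x in a..b, h x) - (1 / μ) * ∫ x in a..b, h x * x ^ μ := by
  have hderiv : ∀ x ∈ Ioo a b, HasDerivAt (fun x => x ^ μ / μ) (x ^ (μ - 1)) x :=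
    fun x hx => by
      simpa [hμ] using
        (hasDerivAt_rpow_const (p := μ) (Or.inl (ha.trans hx.1).ne')).div_const μ
  rw [integral_primitive_mul_deriv hab hh
    ((continuousOn_rpow_const_Icc_of_pos ha b μ).div_const μ) hderiv
    ((continuousOn_rpow_const_Icc_of_pos ha b (μ - 1)).intervalIntegrable_of_Icc hab)]
  simp only [mul_div_assoc', intervalIntegral.integral_div]
  ring

theorem stmt16_general (p γ c α β μ η a t : ℝ) (g : ℝ → ℝ)
    (ha : 0 < a) (hat : a ≤ t) (hμ : 0 < μ)
    (hcont : ContinuousOn g (Set.Icc a t)) :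
    Iv p γ c α β μ a (fun s => Iv p γ c α β η a g s) t =
      (Kconst p γ c α β)⁻¹ *
        ((t ^ μ / μ) * Iv p γ c α β η a g t -
          (1 / μ) * Iv p γ c α β (μ + η) a g t) := by
  have hh : ContinuousOn (fun x => g x * x ^ (η - 1)) (Icc a t) :=
    hcont.mul (continuousOn_rpow_const_Icc_of_pos ha t (η - 1))
  have hpow :
      ∫ x in a..t, g x * x ^ (η - 1) * x ^ μ = ∫ x in a..t, g x * x ^ (μ + η - 1) := by
    refine integral_congr fun x hx => ?_
    rw [uIcc_of_le hat] at hx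
    simp only [mul_assoc, ← rpow_add (ha.trans_le hx.1)]
    ring_nf
  simp only [Iv, mul_assoc, intervalIntegral.integral_const_mul]
  rw [integral_primitive_mul_rpow ha hat hμ.ne' hh, hpow]
  ring

theorem stmt16 (p γ c α β μ η a t : ℝ) (g : ℝ → ℝ)
    (hp : 0 ≤ p) (hγ : 0 < γ) (hγc : γ < c) (hα : 0 < α) (hβ : 0 < β)
    (ha : 0 < a) (hat : a ≤ t) (hμ : 0 < μ) (hμ1 : μ < 1) (hη : 0 < η) (hη1 : η < 1)
    (hcont : ContinuousOn g (Set.Icc a t)) :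
    Iv p γ c α β μ a (fun s => Iv p γ c α β η a g s) t =
      (Kconst p γ c α β)⁻¹ *
        ((t ^ μ / μ) * Iv p γ c α β η a g t -
          (1 / μ) * Iv p γ c α β (μ + η) a g t) :=
  stmt16_general p γ c α β μ η a t g ha hat hμ hcont
end
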